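/- arXiv:2207.12790 — 4 statements merged into one kernel-verified Lean document; each statement's English description precedes it below -/
import Mathlib

section
/- Let T ≥ 1 and let L be a finite set of pairwise distinct columns, each column ℓ ∈ L being a pair of binary vectors (q_ℓ, p_ℓ) with q_ℓ, p_ℓ : {1,…,T} → {0,1}. Let weights χ_ℓ ∈ [0,1] for ℓ ∈ L satisfy Σ_{ℓ∈L} χ_ℓ = 1. Define Γ_t = Σ_{ℓ∈L} q_ℓ(t)·χ_ℓ and Ω_t = Σ_{ℓ∈L} p_ℓ(t)·χ_ℓ for each t ∈ {1,…,T}. Then all the weights χ_ℓ are integers (equivalently, exactly one χ_ℓ equals 1 and all others equal 0) if and only if Γ_t and Ω_t are integers for every t ∈ {1,…,T}. -/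
/-!
The `Γ_t`, `Ω_t` are masses `∑_{ℓ ∈ L, q_ℓ(t) = 1} χ_ℓ` of subfamilies of a probability vector,
so an integral one is `0` or `1`: all columns of positive weight then lie on the same side of
the coordinate `t`. If this holds for every coordinate, the columns of positive weight agree
everywhere, so (the columns being distinct) only one has positive weight, and it carries all
the mass `1`.
-/

open Finset

section ProbabilityVector

variable {ι : Type*} {s : Finset ι} {χ : ι → ℝ}

theorem exists_int_sum_eq (h : ∀ i ∈ s, ∃ n : ℤ, χ i = n) : ∃ n : ℤ, ∑ i ∈ s, χ i = n := by
  choose! n hn using h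
  exact ⟨∑ i ∈ s, n i, by push_cast; exact sum_congr rfl hn⟩

variable (h0 : ∀ i ∈ s, 0 ≤ χ i) (h1 : ∑ i ∈ s, χ i = 1)
include h0 h1

theorem sum_filter_eq_zero_or_sum_filter_not_eq_zero (p : ι → Prop) [DecidablePred p]
    (hint : ∃ n : ℤ, ∑ i ∈ s with p i, χ i = n) :
    ∑ i ∈ s with p i, χ i = 0 ∨ ∑ i ∈ s with ¬p i, χ i = 0 := by
  obtain ⟨n, hn⟩ := hint
  have hsplit := sum_filter_add_sum_filter_not s p χ
  have hnot : 0 ≤ ∑ i ∈ s with ¬p i, χ i := sum_nonneg fun i hi ↦ h0 i (mem_filter.1 hi).1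
  have hn0 : (0 : ℝ) ≤ n := hn ▸ sum_nonneg fun i hi ↦ h0 i (mem_filter.1 hi).1
  have hn1 : (n : ℝ) ≤ 1 := by linarith
  obtain rfl | rfl : n = 0 ∨ n = 1 := by
    have : 0 ≤ n := by exact_mod_cast hn0
    have : n ≤ 1 := by exact_mod_cast hn1
    omega
  · exact Or.inl (by simpa using hn)
  · exact Or.inr (by push_cast at hn; linarith)

theorem iff_of_pos_of_exists_int_sum_filter (p : ι → Prop) [DecidablePred p]
    (hint : ∃ n : ℤ, ∑ i ∈ s with p i, χ i = n) {a b : ι} (ha : a ∈ s) (hb : b ∈ s)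
    (hχa : 0 < χ a) (hχb : 0 < χ b) : p a ↔ p b := by
  have vanish (q : ι → Prop) [DecidablePred q] (hq : ∑ i ∈ s with q i, χ i = 0)
      {i : ι} (hi : i ∈ s) (hχi : 0 < χ i) : ¬q i := fun hqi ↦
    hχi.ne' <| (sum_eq_zero_iff_of_nonneg fun j hj ↦ h0 j (mem_filter.1 hj).1).1 hq i
      (mem_filter.2 ⟨hi, hqi⟩)
  rcases sum_filter_eq_zero_or_sum_filter_not_eq_zero h0 h1 p hint with hp | hnp
  · exact iff_of_false (vanish p hp ha hχa) (vanish p hp hb hχb)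
  · exact iff_of_true (not_not.1 (vanish _ hnp ha hχa)) (not_not.1 (vanish _ hnp hb hχb))

theorem eq_one_of_forall_pos_eq {a : ι} (ha : a ∈ s) (hpos : ∀ b ∈ s, 0 < χ b → b = a) :
    χ a = 1 := by
  refine h1 ▸ (sum_eq_single_of_mem a ha fun b hb hba ↦ ?_).symm
  exact ((h0 b hb).eq_or_lt.resolve_right fun hχb ↦ hba (hpos b hb hχb)).symm

end ProbabilityVector

theorem stmt_0_general (T : ℕ)
    (L : Finset ((Fin T → Bool) × (Fin T → Bool)))
    (χ : ((Fin T → Bool) × (Fin T → Bool)) → ℝ)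
    (hχ : ∀ ℓ ∈ L, 0 ≤ χ ℓ ∧ χ ℓ ≤ 1)
    (hsum : ∑ ℓ ∈ L, χ ℓ = 1) :
    (∀ ℓ ∈ L, ∃ n : ℤ, χ ℓ = (n : ℝ)) ↔
      (∀ t : Fin T,
        (∃ n : ℤ, ∑ ℓ ∈ L, (if ℓ.1 t then (1 : ℝ) else 0) * χ ℓ = (n : ℝ)) ∧
        (∃ n : ℤ, ∑ ℓ ∈ L, (if ℓ.2 t then (1 : ℝ) else 0) * χ ℓ = (n : ℝ))) := by
  have h0 ℓ (hℓ : ℓ ∈ L) : 0 ≤ χ ℓ := (hχ ℓ hℓ).1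
  simp only [boole_mul, ← sum_filter]
  constructor
  · exact fun h t ↦ ⟨exists_int_sum_eq fun ℓ hℓ ↦ h ℓ (mem_filter.1 hℓ).1,
      exists_int_sum_eq fun ℓ hℓ ↦ h ℓ (mem_filter.1 hℓ).1⟩
  · intro h ℓ hℓ
    rcases (h0 ℓ hℓ).eq_or_lt with hχℓ | hχℓ
    · exact ⟨0, by simp [← hχℓ]⟩
    have same_column a (ha : a ∈ L) (hχa : 0 < χ a) : a = ℓ := Prod.ext
      (funext fun t ↦ Bool.eq_iff_iff.2 <|
        iff_of_pos_of_exists_int_sum_filter h0 hsum _ (h t).1 ha hℓ hχa hχℓ)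
      (funext fun t ↦ Bool.eq_iff_iff.2 <|
        iff_of_pos_of_exists_int_sum_filter h0 hsum _ (h t).2 ha hℓ hχa hχℓ)
    exact ⟨1, by rw [eq_one_of_forall_pos_eq h0 hsum hℓ same_column, Int.cast_one]⟩

/-- Let `T ≥ 1` and let `L` be a finite set of pairwise distinct columns,
each column `ℓ ∈ L` being a pair of binary vectors `(q_ℓ, p_ℓ)` with
`q_ℓ, p_ℓ : {1,…,T} → {0,1}`.  Let weights `χ_ℓ ∈ [0,1]` for `ℓ ∈ L` satisfy
`Σ_{ℓ∈L} χ_ℓ = 1`.  Define `Γ_t = Σ_{ℓ∈L} q_ℓ(t)·χ_ℓ` and `Ω_t = Σ_{ℓ∈L} p_ℓ(t)·χ_ℓ`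
for each `t ∈ {1,…,T}`.  Then all the weights `χ_ℓ` are integers if and only if
`Γ_t` and `Ω_t` are integers for every `t ∈ {1,…,T}`. -/
theorem stmt_0 (T : ℕ) (hT : 1 ≤ T)
    (L : Finset ((Fin T → Bool) × (Fin T → Bool)))
    (χ : ((Fin T → Bool) × (Fin T → Bool)) → ℝ)
    (hχ : ∀ ℓ ∈ L, 0 ≤ χ ℓ ∧ χ ℓ ≤ 1)
    (hsum : ∑ ℓ ∈ L, χ ℓ = 1) :
    (∀ ℓ ∈ L, ∃ n : ℤ, χ ℓ = (n : ℝ)) ↔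
      (∀ t : Fin T,
        (∃ n : ℤ, ∑ ℓ ∈ L, (if ℓ.1 t then (1 : ℝ) else 0) * χ ℓ = (n : ℝ)) ∧
        (∃ n : ℤ, ∑ ℓ ∈ L, (if ℓ.2 t then (1 : ℝ) else 0) * χ ℓ = (n : ℝ))) :=
  stmt_0_general T L χ hχ hsum
end

section
/- Consider the reduced single-slot MCSP instance built from a monotone 3-SAT formula F with N clauses and M variables (with content size s > 0, AoI cost f > 0, user download cost α and server update cost β satisfying α > β > 0). Suppose every cache server h caches exactly one content c(h) ∈ {A, B}. Then the total cost of this caching decision, with every request served by a candidate cache holding its content whenever possible and by the cloud otherwise, equals M·β·s + 2·M·f + M·α·s + N·f + α·s·u(c), where u(c) is the number of clauses C_k such that no variable occurring in C_k has c-value equal to the clause's requested content (A for negative clauses, B for positive clauses). -/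
/-- The two contents A and B of the reduction. -/
inductive Content : Type
  | A : Content
  | B : Content
  deriving DecidableEq

instance : Fintype Content :=
  ⟨{Content.A, Content.B}, fun x => by cases x <;> simp⟩

/-- A monotone 3-SAT clause over variables `v₁,…,v_M` (indexed by `Fin M`):
a nonempty set of at most three variables, all negated (`pos = false`, a negative
clause) or all non-negated (`pos = true`, a positive clause). -/
structure MClause (M : ℕ) : Type where
  pos : Bool
  vars : Finset (Fin M)
  nonempty : vars.Nonempty
  card_le : vars.card ≤ 3

/-- The content requested by the primary request of a clause: `A` for a negative
clause, `B` for a positive clause. -/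
def reqContent {M : ℕ} (C : MClause M) : Content :=
  if C.pos then Content.B else Content.A

open Classical in
/-- Total cost of the caching decision `σ` in the reduced single-slot MCSP instance
built from the monotone 3-SAT formula `F` (with `M` cache servers, one per variable,
and `N` primary requests, one per clause):
* each cached content incurs update cost `β·s`;
* each of the two auxiliary single-choice requests of each server (one for `A`, one
  for `B`, candidate = that server only) incurs AoI cost `f` if its content is cached
  there, and cloud cost `f + α·s` otherwise;
* the primary request of clause `C_k` (for content `reqContent (F k)`, candidates =
  the servers of the variables of `C_k`) incurs `f` if some candidate server caches
  the requested content, and `f + α·s` otherwise. -/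
noncomputable def totalCost (M N : ℕ) (s f α β : ℝ)
    (F : Fin N → MClause M) (σ : Fin M → Finset Content) : ℝ :=
  (∑ h : Fin M, ((σ h).card : ℝ) * (β * s))
    + (∑ h : Fin M, ∑ c : Content, if c ∈ σ h then f else f + α * s)
    + (∑ k : Fin N, if ∃ v ∈ (F k).vars, reqContent (F k) ∈ σ v then f else f + α * s)

/-!
Every server caches exactly one content, so it pays the update cost `β·s` once, serves one of
its two auxiliary requests itself (cost `f`) and sends the other to the cloud (cost `f + α·s`).
Every primary request costs `f`, plus `α·s` exactly when its clause is not satisfied by `c`.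
-/

theorem Fintype.sum_ite_eq_sub_add {ι R : Type*} [Fintype ι] [DecidableEq ι] [AddCommGroup R]
    (d : ι) (a b : R) :
    ∑ x, (if x = d then a else b) = a - b + Fintype.card ι • b := by
  have hsplit : ∀ x, (if x = d then a else b) = (if x = d then a - b else 0) + b := by
    intro x
    split_ifs <;> abel
  simp only [hsplit, Finset.sum_add_distrib, Finset.sum_ite_eq', Finset.mem_univ, if_true,
    Finset.sum_const, Finset.card_univ]

theorem Fintype.sum_ite_add_eq {ι R : Type*} [Fintype ι] [AddCommMonoid R]
    (p : ι → Prop) [DecidablePred p] (a g : R) :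
    ∑ x, (if p x then a else a + g) =
      Fintype.card ι • a + (Finset.univ.filter (fun x => ¬ p x)).card • g := by
  have hsplit : ∀ x, (if p x then a else a + g) = a + (if ¬ p x then g else 0) := by
    intro x
    split_ifs <;> simp_all
  simp only [hsplit, Finset.sum_add_distrib, Finset.sum_const, Finset.card_univ,
    ← Finset.sum_filter]

theorem Content.card_eq_two : Fintype.card Content = 2 := rfl

open Classical in
theorem stmt_4_general (M N : ℕ) (s f α β : ℝ)
    (F : Fin N → MClause M) (c : Fin M → Content) :
    totalCost M N s f α β F (fun h => {c h}) =
      M * β * s + 2 * M * f + M * α * s + N * f +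
        α * s * ((Finset.univ.filter
          (fun k : Fin N => ¬ ∃ v ∈ (F k).vars, c v = reqContent (F k))).card : ℝ) := by
  have hupdate : ∑ h : Fin M, (({c h} : Finset Content).card : ℝ) * (β * s) = M * (β * s) := by
    simp
  have hauxiliary : ∀ h : Fin M,
      ∑ d : Content, (if d ∈ ({c h} : Finset Content) then f else f + α * s) = 2 * f + α * s := by
    intro h
    simp only [Finset.mem_singleton, Fintype.sum_ite_eq_sub_add, Content.card_eq_two,
      nsmul_eq_mul]
    ring
  have hprimary : ∀ k : Fin N,
      (∃ v ∈ (F k).vars, reqContent (F k) ∈ ({c v} : Finset Content)) ↔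
        ∃ v ∈ (F k).vars, c v = reqContent (F k) := by
    simp only [Finset.mem_singleton, eq_comm, implies_true]
  simp only [totalCost, hupdate, hauxiliary, hprimary, Fintype.sum_ite_add_eq, Finset.sum_const,
    Finset.card_univ, Fintype.card_fin, nsmul_eq_mul]
  ring

open Classical in
/-- In the reduced single-slot MCSP instance built from a monotone
3-SAT formula `F` with `N` clauses and `M` variables (content size `s > 0`, AoI cost
`f > 0`, user download cost `α` and server update cost `β` with `α > β > 0`), suppose
every cache server `h` caches exactly one content `c(h) ∈ {A, B}`.  Then the total
cost equals `M·β·s + 2·M·f + M·α·s + N·f + α·s·u(c)`, where `u(c)` is the number of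
clauses `C_k` such that no variable occurring in `C_k` has `c`-value equal to the
clause's requested content. -/
theorem stmt_4 (M N : ℕ) (s f α β : ℝ)
    (hs : 0 < s) (hf : 0 < f) (hβ : 0 < β) (hαβ : β < α)
    (F : Fin N → MClause M) (c : Fin M → Content) :
    totalCost M N s f α β F (fun h => {c h}) =
      M * β * s + 2 * M * f + M * α * s + N * f +
        α * s * ((Finset.univ.filter
          (fun k : Fin N => ¬ ∃ v ∈ (F k).vars, c v = reqContent (F k))).card : ℝ) :=
  stmt_4_general M N s f α β F c
end

section
/- Consider the reduced single-slot MCSP instance built from a monotone 3-SAT formula F with N clauses and M variables (with content size s > 0, AoI cost f > 0, user download cost α and server update cost β satisfying α > β > 0). If a caching decision leaves some server caching no content, then there exists another caching decision, obtained by letting that server cache one content (and keeping all other servers unchanged), whose total cost is strictly smaller. Consequently, in every cost-minimizing caching decision each server caches exactly one of the two contents A and B. -/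
/-!
Caching a content on an empty server costs `β·s` in updates, saves `α·s` on that server's
auxiliary request for it, and can only help the primary requests; since `α > β` this is a
strict improvement. Hence a minimizer caches something on every server, and the capacity `s`
leaves room for at most one content.
-/

theorem Fintype.sum_ite_mem_const {ι R : Type*} [Fintype ι] [DecidableEq ι] [Ring R]
    (t : Finset ι) (a b : R) :
    ∑ i, (if i ∈ t then a else b) = t.card * a + ((Fintype.card ι : R) - t.card) * b := by
  rw [Finset.sum_ite, Finset.filter_mem_eq_inter, Finset.univ_inter, Finset.sum_const,
    Finset.sum_const, Finset.filter_notMem_eq_sdiff, ← Finset.compl_eq_univ_sdiff,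
    Finset.card_compl, nsmul_eq_mul, nsmul_eq_mul, Nat.cast_sub (Finset.card_le_univ t)]

section Cost

variable {M N : ℕ} (s f α β : ℝ)

def serverCost (t : Finset Content) : ℝ :=
  t.card * (β * s) + ∑ c : Content, if c ∈ t then f else f + α * s

open Classical in
def clauseCost (F : Fin N → MClause M) (σ : Fin M → Finset Content) : ℝ :=
  ∑ k : Fin N, if ∃ v ∈ (F k).vars, reqContent (F k) ∈ σ v then f else f + α * s

theorem totalCost_eq_sum_serverCost_add_clauseCost (F : Fin N → MClause M)
    (σ : Fin M → Finset Content) :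
    totalCost M N s f α β F σ = ∑ h, serverCost s f α β (σ h) + clauseCost s f α F σ := by
  simp only [totalCost, serverCost, clauseCost, Finset.sum_add_distrib]

theorem serverCost_eq (t : Finset Content) :
    serverCost s f α β t = 2 * (f + α * s) - t.card * ((α - β) * s) := by
  rw [serverCost, Fintype.sum_ite_mem_const, show Fintype.card Content = 2 from rfl]
  push_cast
  ring

variable {s f α β}

theorem serverCost_le_of_subset (hs : 0 ≤ s) (hαβ : β ≤ α) {t t' : Finset Content}
    (htt' : t ⊆ t') : serverCost s f α β t' ≤ serverCost s f α β t := by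
  have hgain : 0 ≤ (α - β) * s := mul_nonneg (sub_nonneg.mpr hαβ) hs
  have hcard : (t.card : ℝ) ≤ t'.card := by exact_mod_cast Finset.card_le_card htt'
  rw [serverCost_eq, serverCost_eq]
  nlinarith

theorem serverCost_singleton_lt_empty (hs : 0 < s) (hαβ : β < α) (c : Content) :
    serverCost s f α β {c} < serverCost s f α β ∅ := by
  have hgain : 0 < (α - β) * s := mul_pos (sub_pos.mpr hαβ) hs
  rw [serverCost_eq, serverCost_eq, Finset.card_singleton, Finset.card_empty]
  push_cast
  linarith

theorem clauseCost_anti (hαs : 0 ≤ α * s) (F : Fin N → MClause M)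
    {σ τ : Fin M → Finset Content} (hστ : ∀ h, σ h ⊆ τ h) :
    clauseCost s f α F τ ≤ clauseCost s f α F σ := by
  refine Finset.sum_le_sum fun k _ => ?_
  split_ifs with hτ hσ hσ
  · rfl
  · linarith
  · exact (hτ (hσ.imp fun v ⟨hv, hc⟩ => ⟨hv, hστ v hc⟩)).elim
  · rfl

theorem subset_update_singleton_of_eq_empty {σ : Fin M → Finset Content} {h₀ : Fin M}
    (h0 : σ h₀ = ∅) (c : Content) (h : Fin M) : σ h ⊆ Function.update σ h₀ {c} h := by
  rcases eq_or_ne h h₀ with rfl | hne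
  · simp [h0]
  · rw [Function.update_of_ne hne]

theorem totalCost_update_singleton_lt_of_eq_empty (hs : 0 < s) (hβ : 0 < β) (hαβ : β < α)
    (F : Fin N → MClause M) {σ : Fin M → Finset Content} {h₀ : Fin M} (h0 : σ h₀ = ∅)
    (c : Content) :
    totalCost M N s f α β F (Function.update σ h₀ {c}) < totalCost M N s f α β F σ := by
  have hsub := subset_update_singleton_of_eq_empty h0 c
  rw [totalCost_eq_sum_serverCost_add_clauseCost, totalCost_eq_sum_serverCost_add_clauseCost]
  refine add_lt_add_of_lt_of_le
    (Finset.sum_lt_sum (fun h _ => ?_) ⟨h₀, Finset.mem_univ _, ?_⟩)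
    (clauseCost_anti (mul_pos (hβ.trans hαβ) hs).le F hsub)
  · exact serverCost_le_of_subset hs.le hαβ.le (hsub h)
  · simpa [h0] using serverCost_singleton_lt_empty hs hαβ c

def IsFeasible (s : ℝ) (σ : Fin M → Finset Content) : Prop :=
  ∀ h, ((σ h).card : ℝ) * s ≤ s

namespace IsFeasible

variable {σ : Fin M → Finset Content}

theorem card_le_one (hs : 0 < s) (hσ : IsFeasible s σ) (h : Fin M) : (σ h).card ≤ 1 := by
  have hcap := hσ h
  have hcard : ((σ h).card : ℝ) ≤ 1 := by nlinarith
  exact_mod_cast hcard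

theorem update_singleton (hσ : IsFeasible s σ) (h₀ : Fin M) (c : Content) :
    IsFeasible s (Function.update σ h₀ {c}) := by
  intro h
  rcases eq_or_ne h h₀ with rfl | hne
  · simp
  · rw [Function.update_of_ne hne]
    exact hσ h

end IsFeasible

end Cost

theorem stmt_5_general (M N : ℕ) (s f α β : ℝ)
    (hs : 0 < s) (hβ : 0 < β) (hαβ : β < α)
    (F : Fin N → MClause M) :
    (∀ σ : Fin M → Finset Content, (∀ h : Fin M, ((σ h).card : ℝ) * s ≤ s) →
      ∀ h₀ : Fin M, σ h₀ = ∅ →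
        ∃ c₀ : Content,
          totalCost M N s f α β F (Function.update σ h₀ {c₀}) <
            totalCost M N s f α β F σ) ∧
    (∀ σ : Fin M → Finset Content, (∀ h : Fin M, ((σ h).card : ℝ) * s ≤ s) →
      (∀ σ' : Fin M → Finset Content, (∀ h : Fin M, ((σ' h).card : ℝ) * s ≤ s) →
        totalCost M N s f α β F σ ≤ totalCost M N s f α β F σ') →
      ∀ h : Fin M, ∃ c : Content, σ h = {c}) := by
  refine ⟨fun σ _ h₀ h0 =>
    ⟨.A, totalCost_update_singleton_lt_of_eq_empty hs hβ hαβ F h0 .A⟩, ?_⟩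
  intro σ hσ hmin h
  have hne : (σ h).Nonempty := by
    rw [Finset.nonempty_iff_ne_empty]
    intro h0
    exact (totalCost_update_singleton_lt_of_eq_empty hs hβ hαβ F h0 .A).not_ge
      (hmin _ (IsFeasible.update_singleton hσ h .A))
  exact Finset.card_eq_one.mp
    ((IsFeasible.card_le_one hs hσ h).antisymm (Finset.one_le_card.mpr hne))

/-- In the reduced single-slot MCSP instance built from a monotone
3-SAT formula `F` with `N` clauses and `M` variables (content size `s > 0`, AoI cost
`f > 0`, user download cost `α` and server update cost `β` with `α > β > 0`):
if a caching decision (each server caching a set of contents of total size at most `s`)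
leaves some server caching no content, then there exists another caching decision,
obtained by letting that server cache one content (and keeping all other servers
unchanged), whose total cost is strictly smaller.  Consequently, in every
cost-minimizing caching decision each server caches exactly one of the two contents
`A` and `B`. -/
theorem stmt_5 (M N : ℕ) (s f α β : ℝ)
    (hs : 0 < s) (hf : 0 < f) (hβ : 0 < β) (hαβ : β < α)
    (F : Fin N → MClause M) :
    (∀ σ : Fin M → Finset Content, (∀ h : Fin M, ((σ h).card : ℝ) * s ≤ s) →
      ∀ h₀ : Fin M, σ h₀ = ∅ →
        ∃ c₀ : Content,
          totalCost M N s f α β F (Function.update σ h₀ {c₀}) <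
            totalCost M N s f α β F σ) ∧
    (∀ σ : Fin M → Finset Content, (∀ h : Fin M, ((σ h).card : ℝ) * s ≤ s) →
      (∀ σ' : Fin M → Finset Content, (∀ h : Fin M, ((σ' h).card : ℝ) * s ≤ s) →
        totalCost M N s f α β F σ ≤ totalCost M N s f α β F σ') →
      ∀ h : Fin M, ∃ c : Content, σ h = {c}) :=
  stmt_5_general M N s f α β hs hβ hαβ F
end

section
/- Fix a horizon of T ≥ 1 time slots and a single content on a single cache server. A pair of binary assignments (x, z), where x_{t,a} ∈ {0,1} is defined for 1 ≤ t ≤ T and 0 ≤ a ≤ t−1 and z_t ∈ {0,1} for 1 ≤ t ≤ T, is called feasible if it satisfies the AoI-evolution constraints x_{t−1,a−1} ≥ x_{t,a} for all 2 ≤ t ≤ T and 1 ≤ a ≤ t−1, and the consistency constraints Σ_{a=0}^{t−1} x_{t,a} = z_t for all 1 ≤ t ≤ T. Then the map Φ sending a feasible (x, z) to the pair (q, p) with q_t = z_t and p_t = x_{t,0} is a bijection from the set of feasible pairs (x, z) onto the set D of pairs of binary vectors (q, p) of length T satisfying: p_t ≤ q_t for all t, and whenever q_t = 1, either p_t = 1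 or (t ≥ 2 and q_{t−1} = 1). Moreover, the inverse map is given explicitly by: x_{t,a} = 1 if and only if q_τ = 1 for all τ ∈ {t−a, …, t}, p_{t−a} = 1, and p_τ = 0 for all τ ∈ {t−a+1, …, t}. -/
/-!
Consistency makes `x_{t,·}` the indicator of at most one age, present exactly when `z_t = 1`,
and AoI evolution says that age `a ≥ 1` in slot `t` comes from age `a - 1` in slot `t - 1`.
Following an age back to `0` shows that `x_{t,a} = 1` forces the explicit condition on
`(z, x_{·,0})`; as that condition holds for at most one `a`, it determines `x`, whence
injectivity. Conversely, for `(q, p) ∈ D` walking back along the run of cached slots ending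
at `t` reaches an update, so the condition defines a feasible assignment with `x_{·,0} = p`.
-/

/-- Feasibility of a pair of binary assignments `(x, z)` over a horizon of `T` time
slots (0-indexed: slot `t : Fin T` stands for slot `t+1` of `{1,…,T}`), where
`x t a = true` means the content is cached with AoI `a` in slot `t` and
`z t = true` means the content is cached in slot `t`:
* AoI-evolution constraints: `x_{t−1,a−1} ≥ x_{t,a}` whenever `a ≥ 1`;
* consistency constraints: `Σ_{a=0}^{t} x_{t,a} = z_t` for every slot `t`. -/
def Feasible (T : ℕ) (x : (t : Fin T) → Fin (t.1 + 1) → Bool) (z : Fin T → Bool) : Prop :=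
  (∀ (t : Fin T) (a : Fin (t.1 + 1)), 1 ≤ a.1 →
      x t a ≤ x ⟨t.1 - 1, Nat.lt_of_le_of_lt (Nat.sub_le _ _) t.isLt⟩
          ((⟨a.1 - 1, by have := a.isLt; omega⟩ : Fin (t.1 - 1 + 1)))) ∧
  (∀ t : Fin T,
      (∑ a : Fin (t.1 + 1), (if x t a then 1 else 0)) = (if z t then 1 else 0))

/-- The set `D`: pairs of binary vectors `(q, p)` of length `T` satisfying `p_t ≤ q_t`
for all `t`, and: whenever `q_t = 1`, either `p_t = 1` or (`t ≥ 2` and `q_{t−1} = 1`)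
(in 0-indexed form: `1 ≤ t` and `q_{t−1} = 1`). -/
def InD (T : ℕ) (qp : (Fin T → Bool) × (Fin T → Bool)) : Prop :=
  (∀ t : Fin T, qp.2 t ≤ qp.1 t) ∧
  (∀ t : Fin T, qp.1 t = true →
      qp.2 t = true ∨
        (1 ≤ t.1 ∧ qp.1 ⟨t.1 - 1, Nat.lt_of_le_of_lt (Nat.sub_le _ _) t.isLt⟩ = true))

lemma sum_boole_eq_ite_iff {α : Type*} [Fintype α] (f : α → Bool) (b : Bool) :
    (∑ a, if f a then 1 else 0 : ℕ) = (if b then 1 else 0) ↔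
      ((∃ a, f a = true) ↔ b = true) ∧ ∀ a, f a = true → ∀ a', f a' = true → a = a' := by
  have hle := Finset.card_le_one (s := Finset.univ.filter fun a => f a = true)
  have hpos := Finset.card_pos (s := Finset.univ.filter fun a => f a = true)
  simp only [Finset.mem_filter, Finset.mem_univ, true_and, Finset.filter_nonempty_iff] at hle hpos
  rw [Finset.sum_boole, Nat.cast_id, ← hle, ← hpos]
  cases b <;> simp only [Bool.false_eq_true, ↓reduceIte, iff_false, iff_true] <;> omega

section Schedule

variable {T : ℕ}

/-- The slot `t - a`, truncated at the first slot. -/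
abbrev shiftBack (t : Fin T) (a : ℕ) : Fin T :=
  ⟨t.1 - a, Nat.lt_of_le_of_lt (Nat.sub_le _ _) t.isLt⟩

/-- Under the schedule `(q, p)`, the content cached in slot `t` has AoI `a`. -/
def HasAge (q p : Fin T → Bool) (t : Fin T) (a : ℕ) : Prop :=
  (∀ τ : Fin T, t.1 - a ≤ τ.1 → τ.1 ≤ t.1 → q τ = true) ∧
  p (shiftBack t a) = true ∧
  (∀ τ : Fin T, t.1 - a + 1 ≤ τ.1 → τ.1 ≤ t.1 → p τ = false)

variable {q p : Fin T → Bool}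

lemma HasAge.cached {t : Fin T} {a : ℕ} (h : HasAge q p t a) : q t = true :=
  h.1 t (Nat.sub_le _ _) le_rfl

lemma hasAge_zero_iff {t : Fin T} : HasAge q p t 0 ↔ q t = true ∧ p t = true := by
  have hτ : ∀ τ : Fin T, t.1 ≤ τ.1 → τ.1 ≤ t.1 → τ = t := fun τ h₁ h₂ => Fin.ext (by omega)
  constructor
  · exact fun h => ⟨h.cached, h.2.1⟩
  · rintro ⟨hq, hp⟩
    refine ⟨fun τ h₁ h₂ => hτ τ h₁ h₂ ▸ hq, hp, fun τ h₁ h₂ => by omega⟩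

lemma hasAge_iff_of_pos {t : Fin T} {a : ℕ} (ha : 1 ≤ a) (hat : a ≤ t.1) :
    HasAge q p t a ↔ HasAge q p (shiftBack t 1) (a - 1) ∧ q t = true ∧ p t = false := by
  have hτ : ∀ τ : Fin T, t.1 ≤ τ.1 → τ.1 ≤ t.1 → τ = t := fun τ h₁ h₂ => Fin.ext (by omega)
  have hstart : shiftBack (shiftBack t 1) (a - 1) = shiftBack t a := Fin.ext (by simp; omega)
  simp only [HasAge, hstart]
  constructor
  · rintro ⟨hq, hp, hp'⟩
    refine ⟨⟨fun τ h₁ h₂ => hq τ (by omega) (by omega), hp,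
      fun τ h₁ h₂ => hp' τ (by omega) (by omega)⟩,
      hq t (by omega) le_rfl, hp' t (by omega) le_rfl⟩
  · rintro ⟨⟨hq, hp, hp'⟩, hqt, hpt⟩
    refine ⟨fun τ h₁ h₂ => ?_, hp, fun τ h₁ h₂ => ?_⟩
    · rcases Nat.lt_or_ge τ.1 t.1 with h | h
      · exact hq τ (by omega) (by omega)
      · exact hτ τ h h₂ ▸ hqt
    · rcases Nat.lt_or_ge τ.1 t.1 with h | h
      · exact hp' τ (by omega) (by omega)
      · exact hτ τ h h₂ ▸ hpt

lemma HasAge.unique {t : Fin T} {a b : ℕ} (ha : HasAge q p t a) (hb : HasAge q p t b)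
    (hat : a ≤ t.1) (hbt : b ≤ t.1) : a = b := by
  wlog hab : a < b generalizing a b
  · rcases Nat.lt_or_ge b a with h | h
    · exact (this hb ha hbt hat h).symm
    · omega
  have := hb.2.2 (shiftBack t a) (by simp; omega) (by simp)
  simp [ha.2.1] at this

end Schedule

section Feasible

variable {T : ℕ} {x : (t : Fin T) → Fin (t.1 + 1) → Bool} {z : Fin T → Bool}

/-- The update indicator `p_t = x_{t,0}`. -/
def updates (x : (t : Fin T) → Fin (t.1 + 1) → Bool) (t : Fin T) : Bool :=
  x t ⟨0, Nat.succ_pos _⟩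

lemma Feasible.exists_age_iff (hf : Feasible T x z) (t : Fin T) :
    (∃ a, x t a = true) ↔ z t = true :=
  ((sum_boole_eq_ite_iff _ _).1 (hf.2 t)).1

lemma Feasible.age_unique (hf : Feasible T x z) {t : Fin T} {a b : Fin (t.1 + 1)}
    (ha : x t a = true) (hb : x t b = true) : a = b :=
  ((sum_boole_eq_ite_iff _ _).1 (hf.2 t)).2 a ha b hb

lemma Feasible.cached_of_age (hf : Feasible T x z) {t : Fin T} {a : Fin (t.1 + 1)}
    (h : x t a = true) : z t = true :=
  (hf.exists_age_iff t).1 ⟨a, h⟩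

lemma Feasible.age_pred (hf : Feasible T x z) {t : Fin T} {a : Fin (t.1 + 1)} (ha : 1 ≤ a.1)
    (h : x t a = true) : x (shiftBack t 1) ⟨a.1 - 1, by simp; omega⟩ = true :=
  Bool.le_iff_imp.1 (hf.1 t a ha) h

lemma Feasible.hasAge_of_age (hf : Feasible T x z) {t : Fin T} (a : Fin (t.1 + 1))
    (h : x t a = true) : HasAge z (updates x) t a.1 := by
  obtain ⟨n, hn⟩ := a
  induction n generalizing t with
  | zero => exact hasAge_zero_iff.2 ⟨hf.cached_of_age h, h⟩
  | succ n ih =>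
    show HasAge z (updates x) t (n + 1)
    have hfresh : updates x t = false :=
      Bool.eq_false_iff.2 fun h₀ => absurd (hf.age_unique h₀ h) (by simp [Fin.ext_iff])
    exact (hasAge_iff_of_pos (by omega) (by omega)).2
      ⟨ih _ (hf.age_pred (by simp) h), hf.cached_of_age h, hfresh⟩

theorem Feasible.age_eq_true_iff (hf : Feasible T x z) (t : Fin T) (a : Fin (t.1 + 1)) :
    x t a = true ↔ HasAge z (updates x) t a.1 := by
  refine ⟨hf.hasAge_of_age a, fun h => ?_⟩
  obtain ⟨b, hb⟩ := (hf.exists_age_iff t).2 h.cached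
  rwa [Fin.ext (h.unique (hf.hasAge_of_age b hb) a.is_le b.is_le)]

theorem Feasible.eq_of_updates_eq {x' : (t : Fin T) → Fin (t.1 + 1) → Bool}
    (hf : Feasible T x z) (hf' : Feasible T x' z) (h : updates x = updates x') : x = x' := by
  funext t a
  rw [Bool.eq_iff_iff, hf.age_eq_true_iff, hf'.age_eq_true_iff, h]

theorem Feasible.inD (hf : Feasible T x z) : InD T (z, updates x) := by
  refine ⟨fun t => Bool.le_iff_imp.2 hf.cached_of_age, fun t hz => ?_⟩
  obtain ⟨⟨a, ha⟩, h⟩ := (hf.exists_age_iff t).2 hz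
  rcases a with _ | a
  · exact Or.inl h
  · exact Or.inr ⟨by omega, hf.cached_of_age (hf.age_pred (by simp) h)⟩

end Feasible

section Reconstruction

variable {T : ℕ} {q p : Fin T → Bool}

instance (q p : Fin T → Bool) (t : Fin T) (a : ℕ) : Decidable (HasAge q p t a) := by
  unfold HasAge; infer_instance

def ageAssignment (q p : Fin T → Bool) (t : Fin T) (a : Fin (t.1 + 1)) : Bool :=
  decide (HasAge q p t a.1)

lemma ageAssignment_eq_true_iff {t : Fin T} {a : Fin (t.1 + 1)} :
    ageAssignment q p t a = true ↔ HasAge q p t a.1 :=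
  decide_eq_true_iff

lemma InD.exists_hasAge (hD : InD T (q, p)) (t : Fin T) (hq : q t = true) :
    ∃ a ≤ t.1, HasAge q p t a := by
  obtain ⟨n, hn⟩ := t
  induction n with
  | zero => exact ⟨0, le_rfl, hasAge_zero_iff.2 ⟨hq, (hD.2 _ hq).resolve_right (by simp)⟩⟩
  | succ n ih =>
    cases hp : p ⟨n + 1, hn⟩ with
    | true => exact ⟨0, Nat.zero_le _, hasAge_zero_iff.2 ⟨hq, hp⟩⟩
    | false =>
      have hq' : q ⟨n, by omega⟩ = true := ((hD.2 _ hq).resolve_left (by simp [hp])).2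
      obtain ⟨a, ha, h⟩ := ih (by omega) hq'
      exact ⟨a + 1, by simpa using ha,
        (hasAge_iff_of_pos (by omega) (by simpa using ha)).2 ⟨h, hq, hp⟩⟩

theorem InD.feasible_ageAssignment (hD : InD T (q, p)) : Feasible T (ageAssignment q p) q := by
  refine ⟨fun t a ha => Bool.le_iff_imp.2 fun h => ?_,
    fun t => (sum_boole_eq_ite_iff _ _).2 ⟨?_, ?_⟩⟩
  · rw [ageAssignment_eq_true_iff] at h ⊢
    exact ((hasAge_iff_of_pos ha a.is_le).1 h).1
  · simp only [ageAssignment_eq_true_iff]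
    refine ⟨fun ⟨_, h⟩ => h.cached, fun hq => ?_⟩
    obtain ⟨a, ha, h⟩ := hD.exists_hasAge t hq
    exact ⟨⟨a, by omega⟩, h⟩
  · simp only [ageAssignment_eq_true_iff]
    exact fun a ha b hb => Fin.ext (ha.unique hb a.is_le b.is_le)

theorem InD.updates_ageAssignment (hD : InD T (q, p)) : updates (ageAssignment q p) = p := by
  funext t
  rw [Bool.eq_iff_iff, updates, ageAssignment_eq_true_iff, hasAge_zero_iff]
  exact ⟨And.right, fun hp => ⟨Bool.le_iff_imp.1 (hD.1 t) hp, hp⟩⟩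

end Reconstruction

theorem stmt_8_general (T : ℕ) :
    ∃ Φ : {xz : ((t : Fin T) → Fin (t.1 + 1) → Bool) × (Fin T → Bool) //
            Feasible T xz.1 xz.2} →
          {qp : (Fin T → Bool) × (Fin T → Bool) // InD T qp},
      (∀ xz, (Φ xz).val =
          (xz.val.2, fun t : Fin T => xz.val.1 t ⟨0, Nat.succ_pos _⟩)) ∧
      Function.Bijective Φ ∧
      (∀ xz, ∀ (t : Fin T) (a : Fin (t.1 + 1)),
        xz.val.1 t a = true ↔
          ((∀ τ : Fin T, t.1 - a.1 ≤ τ.1 → τ.1 ≤ t.1 → (Φ xz).val.1 τ = true) ∧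
           (Φ xz).val.2 ⟨t.1 - a.1, Nat.lt_of_le_of_lt (Nat.sub_le _ _) t.isLt⟩ = true ∧
           (∀ τ : Fin T, t.1 - a.1 + 1 ≤ τ.1 → τ.1 ≤ t.1 → (Φ xz).val.2 τ = false))) := by
  refine ⟨fun xz => ⟨(xz.val.2, updates xz.val.1), xz.prop.inD⟩, fun _ => rfl, ⟨?_, ?_⟩,
    fun xz t a => xz.prop.age_eq_true_iff t a⟩
  · rintro ⟨⟨x, z⟩, hf⟩ ⟨⟨x', z'⟩, hf'⟩ h
    simp only [Subtype.mk.injEq, Prod.mk.injEq] at h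
    obtain ⟨rfl, hupd⟩ := h
    cases hf.eq_of_updates_eq hf' hupd
    rfl
  · rintro ⟨⟨q, p⟩, hD⟩
    exact ⟨⟨(ageAssignment q p, q), hD.feasible_ageAssignment⟩,
      Subtype.ext (Prod.ext rfl hD.updates_ageAssignment)⟩

/-- Fix a horizon of `T ≥ 1` time slots and a single content on a
single cache server.  The map `Φ` sending a feasible pair `(x, z)` to the pair
`(q, p)` with `q_t = z_t` and `p_t = x_{t,0}` is a bijection from the set of feasible
pairs `(x, z)` onto the set `D`.  Moreover, the inverse map is given explicitly by:
`x_{t,a} = 1` if and only if `q_τ = 1` for all `τ ∈ {t−a, …, t}`, `p_{t−a} = 1`, and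
`p_τ = 0` for all `τ ∈ {t−a+1, …, t}`. -/
theorem stmt_8 (T : ℕ) (hT : 1 ≤ T) :
    ∃ Φ : {xz : ((t : Fin T) → Fin (t.1 + 1) → Bool) × (Fin T → Bool) //
            Feasible T xz.1 xz.2} →
          {qp : (Fin T → Bool) × (Fin T → Bool) // InD T qp},
      (∀ xz, (Φ xz).val =
          (xz.val.2, fun t : Fin T => xz.val.1 t ⟨0, Nat.succ_pos _⟩)) ∧
      Function.Bijective Φ ∧
      (∀ xz, ∀ (t : Fin T) (a : Fin (t.1 + 1)),
        xz.val.1 t a = true ↔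
          ((∀ τ : Fin T, t.1 - a.1 ≤ τ.1 → τ.1 ≤ t.1 → (Φ xz).val.1 τ = true) ∧
           (Φ xz).val.2 ⟨t.1 - a.1, Nat.lt_of_le_of_lt (Nat.sub_le _ _) t.isLt⟩ = true ∧
           (∀ τ : Fin T, t.1 - a.1 + 1 ≤ τ.1 → τ.1 ≤ t.1 → (Φ xz).val.2 τ = false))) :=
  stmt_8_general T
end
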